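/- Let U and W be ultrafilters on sets X and Y such that U ⋉ W = U ⋊ W, and let Ū = p_*(U) and W̄ = q_*(W) be pushforwards of U and W by functions p : X → X' and q : Y → Y'. Then Ū ⋉ W̄ = Ū ⋊ W̄. -/
import Mathlib


open Filter Set Cardinal

universe u v w u' v'

/-- The left tensor product `F ⋉ G` of two filters. -/
def ltimes {X : Type u} {Y : Type v} (F : Filter X) (G : Filter Y) :
    Filter (X × Y) where
  sets := {R | {x | {y | (x, y) ∈ R} ∈ G} ∈ F}
  univ_sets := by simp
  sets_of_superset := by
    intro R S hR hRS
    refine Filter.mem_of_superset hR ?_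
    intro x hx
    exact Filter.mem_of_superset hx fun y hy => hRS hy
  inter_sets := by
    intro R S hR hS
    refine Filter.mem_of_superset (Filter.inter_mem hR hS) ?_
    rintro x ⟨hx1, hx2⟩
    exact Filter.inter_mem hx1 hx2

/-- The right tensor product `F ⋊ G` of two filters. -/
def rtimes {X : Type u} {Y : Type v} (F : Filter X) (G : Filter Y) :
    Filter (X × Y) where
  sets := {R | {y | {x | (x, y) ∈ R} ∈ F} ∈ G}
  univ_sets := by simp
  sets_of_superset := by
    intro R S hR hRS
    refine Filter.mem_of_superset hR ?_
    intro y hy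
    exact Filter.mem_of_superset hy fun x hx => hRS hx
  inter_sets := by
    intro R S hR hS
    refine Filter.mem_of_superset (Filter.inter_mem hR hS) ?_
    rintro y ⟨hy1, hy2⟩
    exact Filter.inter_mem hy1 hy2

/-- `IsFClosed F G` means: `G` is `F`-closed. -/
def IsFClosed {X : Type u} {Y : Type v} (F : Filter X) (G : Filter Y) : Prop :=
  ∀ B : X → Set Y, (∀ x, B x ∈ G) → ∃ A ∈ F, (⋂ x ∈ A, B x) ∈ G

/-- `IsRegularFor F G` means: `F` is `G`-regular. -/
def IsRegularFor {X : Type u} {Y : Type v} (F : Filter X) (G : Filter Y) : Prop :=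
  ∃ A : Y → Set X, (∀ y, A y ∈ F) ∧ ∀ B : Set Y, Bᶜ ∉ G → (⋂ y ∈ B, A y) = ∅

/-- The Katetov order on filters: `G ≤kat H` iff some pushforward of `H` extends `G`. -/
def Katetov {Y : Type u} {Z : Type v} (G : Filter Y) (H : Filter Z) : Prop :=
  ∃ f : Z → Y, Filter.map f H ≤ G

/-- A filter is an ultrafilter. -/
def IsUltra {α : Type u} (F : Filter α) : Prop :=
  ∃ V : Ultrafilter α, (V : Filter α) = F

/-- `(λ, η)`-indecomposability of a filter. -/
def Indecomposable {X : Type u} (F : Filter X) (lam eta : Cardinal.{u}) : Prop :=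
  ∀ P : Set (Set X), #P ≤ eta → ⋃₀ P ∈ F →
    ∃ Q ⊆ P, #Q < lam ∧ ⋃₀ Q ∈ F

/-- `λ`-decomposability: the negation of `(λ, λ)`-indecomposability. -/
def Decomposable {X : Type u} (F : Filter X) (lam : Cardinal.{u}) : Prop :=
  ¬ Indecomposable F lam lam

/-- `(κ, δ)`-regularity of a filter. -/
def CardRegular {X : Type u} (F : Filter X) (kappa delta : Cardinal.{u}) : Prop :=
  ∃ B : delta.out → Set X, (∀ α, B α ∈ F) ∧
    ∀ σ : Set delta.out, kappa ≤ #σ → (⋂ α ∈ σ, B α) = ∅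

/-- The Fréchet filter `F_λ(λ)`: subsets of (a set of size) `λ` whose complement
has cardinality less than `λ`. -/
def frechetFilter (lam : Cardinal.{u}) (h : ℵ₀ ≤ lam) : Filter lam.out where
  sets := {A | #(Aᶜ : Set lam.out) < lam}
  univ_sets := by
    have : #((Set.univ : Set lam.out)ᶜ : Set lam.out) = 0 := by simp
    simp only [Set.mem_setOf_eq, this]
    exact lt_of_lt_of_le aleph0_pos h
  sets_of_superset := by
    intro A B hA hAB
    exact lt_of_le_of_lt (Cardinal.mk_le_mk_of_subset (Set.compl_subset_compl.mpr hAB)) hA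
  inter_sets := by
    intro A B hA hB
    simp only [Set.mem_setOf_eq, Set.compl_inter]
    exact lt_of_le_of_lt (Cardinal.mk_union_le _ _) (Cardinal.add_lt_of_lt h hA hB)

/-- The dual of a filter `F` on `X`: the family of complements of members of `F`. -/
def dualFamily {X : Type u} (F : Filter X) : Set (Set X) := {s | sᶜ ∈ F}

/-- The fine filter `𝔽(F)` on the dual of `F`, generated by the sets
`{σ ∈ F* | x ∈ σ}` for `x ∈ X`. -/
def fineFilter {X : Type u} (F : Filter X) : Filter (dualFamily F) :=
  Filter.generate (Set.range fun x : X => {σ : dualFamily F | x ∈ σ.1})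


lemma mem_ltimes {X : Type u} {Y : Type v} {F : Filter X} {G : Filter Y} {R : Set (X × Y)} :
    R ∈ ltimes F G ↔ {x | {y | (x, y) ∈ R} ∈ G} ∈ F := Iff.rfl

lemma mem_rtimes {X : Type u} {Y : Type v} {F : Filter X} {G : Filter Y} {R : Set (X × Y)} :
    R ∈ rtimes F G ↔ {y | {x | (x, y) ∈ R} ∈ F} ∈ G := Iff.rfl

theorem tensor_comm_pushforward {X : Type u} {Y : Type v}
    {X' : Type u'} {Y' : Type v'}
    (U : Ultrafilter X) (W : Ultrafilter Y) (p : X → X') (q : Y → Y')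
    (h : ltimes (U : Filter X) (W : Filter Y) = rtimes (U : Filter X) (W : Filter Y)) :
    ltimes ((U.map p : Ultrafilter X') : Filter X') ((W.map q : Ultrafilter Y') : Filter Y') =
      rtimes ((U.map p : Ultrafilter X') : Filter X') ((W.map q : Ultrafilter Y') : Filter Y') := by
  ext R
  have hL : R ∈ ltimes ((U.map p : Ultrafilter X') : Filter X')
      ((W.map q : Ultrafilter Y') : Filter Y') ↔
      (fun z : X × Y => (p z.1, q z.2)) ⁻¹' R ∈ ltimes (U : Filter X) (W : Filter Y) := by
    simp only [mem_ltimes, Ultrafilter.coe_map, Filter.mem_map]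
    rfl
  have hR : R ∈ rtimes ((U.map p : Ultrafilter X') : Filter X')
      ((W.map q : Ultrafilter Y') : Filter Y') ↔
      (fun z : X × Y => (p z.1, q z.2)) ⁻¹' R ∈ rtimes (U : Filter X) (W : Filter Y) := by
    simp only [mem_rtimes, Ultrafilter.coe_map, Filter.mem_map]
    rfl
  rw [hL, hR, h]
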